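/- Let k be a positive integer. For every positive integer n, n \cdot p_k(n) = \sum_{m=1}^{n} \sigma^{(k)}(m) \, p_k(n - m). -/

import Mathlib

/-
Write θ = X·d/dX. Counting, over all partitions of n, the parts equal to d (the partitions with at
least j such parts are those of n - dj with j copies of d added) gives Euler's identity
θP = S·P for P = ∑ p(n) Xⁿ and S = ∑ σ(n) Xⁿ. Since θ is a derivation with
θ(f(X^k)) = k·(θf)(X^k), the generating function P(X)·P(X^k) of p_k satisfies
θ(P(X)P(X^k)) = (S(X) + k·S(X^k))·P(X)P(X^k), and the coefficient of X^m in S(X) + k·S(X^k)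
is σ^{(k)}(m).
-/

open Finset

/-- `p n` is the number of partitions of `n`. -/
def p (n : ℕ) : ℕ := Fintype.card (Nat.Partition n)

/-- `pColor k n` is the number of two-color partitions of `n` where the second color
appears only in parts that are multiples of `k`:
`pColor k n = ∑_{i + kj = n, i, j ≥ 0} p i * p j`. -/
def pColor (k n : ℕ) : ℕ :=
  ∑ ij ∈ (range (n + 1) ×ˢ range (n + 1)).filter (fun ij => ij.1 + k * ij.2 = n),
    p ij.1 * p ij.2

/-- `sigmaLabeled k m` is the sum of `k`-labeled divisors of `m`: each divisor of `m`
that is a multiple of `k` is counted twice. -/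
def sigmaLabeled (k m : ℕ) : ℕ :=
  (∑ d ∈ m.divisors, d) + ∑ d ∈ m.divisors.filter (fun d => k ∣ d), d

open PowerSeries ArithmeticFunction
open scoped PowerSeries ArithmeticFunction.sigma

namespace Nat.Partition

variable {n : ℕ}

open Multiset (replicate le_count_iff_replicate_le sum_add sum_replicate)

theorem sum_Icc_count_mul (π : n.Partition) : ∑ d ∈ Icc 1 n, π.parts.count d * d = n :=
  (mem_finsuppAntidiag.1 π.toFinsuppAntidiag_mem_finsuppAntidiag).1

theorem count_mul_le (π : n.Partition) (d : ℕ) : π.parts.count d * d ≤ n := by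
  obtain ⟨s, hs⟩ := Multiset.le_iff_exists_add.1
    (le_count_iff_replicate_le.1 (le_refl (π.parts.count d)))
  have := congrArg Multiset.sum hs
  rw [π.parts_sum, sum_add, sum_replicate, smul_eq_mul] at this
  omega

theorem count_le (π : n.Partition) {d : ℕ} (hd : 0 < d) : π.parts.count d ≤ n :=
  (Nat.le_mul_of_pos_right _ hd).trans (count_mul_le π d)

def partitionWithReplicateEquiv {d j : ℕ} (hd : 0 < d) (h : d * j ≤ n) :
    {π : n.Partition // j ≤ π.parts.count d} ≃ (n - d * j).Partition where
  toFun π := ⟨π.1.parts - replicate j d,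
    fun hi => π.1.parts_pos (Multiset.mem_of_le tsub_le_self hi), by
      have := congrArg Multiset.sum (tsub_add_cancel_of_le (le_count_iff_replicate_le.1 π.2))
      rw [sum_add, sum_replicate, smul_eq_mul, π.1.parts_sum] at this
      grind⟩
  invFun μ := ⟨⟨μ.parts + replicate j d,
    by grind [Multiset.eq_of_mem_replicate, μ.parts_pos], by
      rw [sum_add, μ.parts_sum, sum_replicate, smul_eq_mul]
      grind⟩, by simp⟩
  left_inv π := Subtype.ext <| Partition.ext <|
    tsub_add_cancel_of_le (le_count_iff_replicate_le.1 π.2)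
  right_inv μ := Partition.ext <| add_tsub_cancel_right _ _

theorem card_filter_le_count {d j : ℕ} (hd : 0 < d) :
    #{π : n.Partition | j ≤ π.parts.count d} = if d * j ≤ n then p (n - d * j) else 0 := by
  split_ifs with h
  · rw [← Fintype.card_subtype]
    exact Fintype.card_congr (partitionWithReplicateEquiv hd h)
  · refine Finset.card_eq_zero.2 (filter_eq_empty_iff.2 fun π _ hj => h ?_)
    nlinarith [count_mul_le π d]

theorem sum_count {d : ℕ} (hd : 0 < d) :
    ∑ π : n.Partition, π.parts.count d =
      ∑ j ∈ Icc 1 n, if d * j ≤ n then p (n - d * j) else 0 := by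
  have hcount (π : n.Partition) :
      π.parts.count d = ∑ j ∈ Icc 1 n, if j ≤ π.parts.count d then 1 else 0 := by
    have := π.count_le hd
    rw [sum_boole, Nat.cast_id, show {j ∈ Icc 1 n | j ≤ π.parts.count d} = Icc 1 (π.parts.count d)
      by ext j; simp only [mem_filter, mem_Icc]; omega]
    exact (Nat.card_Icc 1 _).symm
  rw [sum_congr rfl fun π _ => hcount π, sum_comm]
  simp_rw [sum_boole, Nat.cast_id, card_filter_le_count hd]

end Nat.Partition

theorem sum_Icc_sum_divisors {M : Type*} [AddCommMonoid M] (n : ℕ) (f : ℕ → ℕ → M) :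
    ∑ m ∈ Icc 1 n, ∑ d ∈ m.divisors, f d m =
      ∑ d ∈ Icc 1 n, ∑ j ∈ Icc 1 n, if d * j ≤ n then f d (d * j) else 0 := by
  have hIcc : Icc 1 n = Ioc 0 n := rfl
  calc ∑ m ∈ Icc 1 n, ∑ d ∈ m.divisors, f d m
      = ∑ m ∈ Icc 1 n, ∑ x ∈ Icc 1 n ×ˢ Icc 1 n, if x.1 * x.2 = m then f x.1 m else 0 := by
        refine sum_congr rfl fun m hm => ?_
        rw [← Nat.sum_divisorsAntidiagonal (fun d _ => f d m), hIcc,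
          Nat.divisorsAntidiagonal_eq_prod_filter_of_le (by grind) (mem_Icc.1 hm).2,
          sum_filter]
    _ = ∑ x ∈ Icc 1 n ×ˢ Icc 1 n, if x.1 * x.2 ≤ n then f x.1 (x.1 * x.2) else 0 := by
        rw [sum_comm]
        refine sum_congr rfl fun x hx => ?_
        simp only [mem_product, mem_Icc] at hx
        have hpos : 1 ≤ x.1 * x.2 := Nat.mul_pos hx.1.1 hx.2.1
        simp only [sum_ite_eq, mem_Icc, hpos, true_and]
    _ = _ := sum_product _ _ _

theorem Nat.sum_divisors_filter_dvd {k : ℕ} (hk : k ≠ 0) (m : ℕ) :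
    ∑ d ∈ m.divisors with k ∣ d, d = if k ∣ m then k * σ 1 (m / k) else 0 := by
  split_ifs with h
  · obtain ⟨e, rfl⟩ := h
    have himage : {d ∈ (k * e).divisors | k ∣ d} = e.divisors.image (k * ·) := by
      ext d
      simp only [mem_filter, Nat.mem_divisors, mem_image]
      constructor
      · rintro ⟨⟨hd, he⟩, c, rfl⟩
        exact ⟨c, ⟨Nat.dvd_of_mul_dvd_mul_left hk.bot_lt hd, by rintro rfl; simp at he⟩, rfl⟩
      · rintro ⟨c, ⟨hc, he⟩, rfl⟩
        exact ⟨⟨mul_dvd_mul_left k hc, mul_ne_zero hk he⟩, dvd_mul_right k c⟩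
    rw [himage, sum_image fun a _ b _ h => Nat.eq_of_mul_eq_mul_left hk.bot_lt h,
      Nat.mul_div_cancel_left e hk.bot_lt, sigma_one_apply, mul_sum]
  · refine sum_eq_zero fun d hd => absurd ?_ h
    exact (mem_filter.1 hd).2.trans (Nat.dvd_of_mem_divisors (mem_filter.1 hd).1)

theorem mul_p_eq_sum_sigma_mul (n : ℕ) : n * p n = ∑ m ∈ Icc 1 n, σ 1 m * p (n - m) := by
  calc n * p n = ∑ _π : n.Partition, n := by rw [sum_const, card_univ, smul_eq_mul, p, mul_comm]
    _ = ∑ π : n.Partition, ∑ d ∈ Icc 1 n, π.parts.count d * d :=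
        sum_congr rfl fun π _ => π.sum_Icc_count_mul.symm
    _ = ∑ d ∈ Icc 1 n, ∑ j ∈ Icc 1 n, if d * j ≤ n then p (n - d * j) * d else 0 := by
        rw [sum_comm]
        refine sum_congr rfl fun d hd => ?_
        rw [← sum_mul, Nat.Partition.sum_count (mem_Icc.1 hd).1, sum_mul]
        simp only [ite_mul, zero_mul]
    _ = ∑ m ∈ Icc 1 n, σ 1 m * p (n - m) := by
        rw [← sum_Icc_sum_divisors n (fun d m => p (n - m) * d)]
        refine sum_congr rfl fun m _ => ?_
        rw [sigma_one_apply, sum_mul]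
        simp only [mul_comm]

theorem Finset.Nat.sum_antidiagonal_eq_sum_Icc_of_zero {M : Type*} [AddCommMonoid M] {n : ℕ}
    {f : ℕ × ℕ → M} (hf : ∀ m, f (0, m) = 0) :
    ∑ x ∈ antidiagonal n, f x = ∑ m ∈ Icc 1 n, f (m, n - m) := by
  rw [Finset.Nat.sum_antidiagonal_eq_sum_range_succ_mk, range_eq_Ico,
    sum_eq_sum_Ico_succ_bot (Nat.succ_pos n), hf, zero_add]
  rfl

namespace PowerSeries

variable {R : Type*}

section CommSemiring

variable [CommSemiring R]

theorem coeff_X_mul_derivative (f : R⟦X⟧) (n : ℕ) :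
    coeff n (X * d⁄dX R f) = n * coeff n f := by
  cases n with
  | zero => simp
  | succ n => rw [coeff_succ_X_mul, coeff_derivative, mul_comm, Nat.cast_succ]

end CommSemiring

variable [CommRing R]

theorem X_mul_derivative_expand (k : ℕ) (hk : k ≠ 0) (f : R⟦X⟧) :
    X * d⁄dX R (expand k hk f) = k • expand k hk (X * d⁄dX R f) := by
  ext n
  rw [coeff_X_mul_derivative, map_nsmul, coeff_expand, coeff_expand]
  split_ifs with h
  · obtain ⟨m, rfl⟩ := h
    rw [coeff_X_mul_derivative, Nat.mul_div_cancel_left _ (Nat.pos_of_ne_zero hk), nsmul_eq_mul]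
    push_cast
    ring
  · simp

theorem X_mul_derivative_mul_expand_self (k : ℕ) (hk : k ≠ 0) {f s : R⟦X⟧}
    (hf : X * d⁄dX R f = s * f) :
    X * d⁄dX R (f * expand k hk f) = (s + k • expand k hk s) * (f * expand k hk f) := by
  have hE : X * d⁄dX R (expand k hk f) = k • expand k hk s * expand k hk f := by
    rw [X_mul_derivative_expand, hf, map_mul, smul_mul_assoc]
  rw [Derivation.leibniz, smul_eq_mul, smul_eq_mul]
  linear_combination f * hE + expand k hk f * hf

theorem coeff_mul_expand (k : ℕ) (hk : k ≠ 0) (f g : R⟦X⟧) (n : ℕ) :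
    coeff n (f * expand k hk g) =
      ∑ ij ∈ (range (n + 1) ×ˢ range (n + 1)).filter (fun ij => ij.1 + k * ij.2 = n),
        coeff ij.1 f * coeff ij.2 g := by
  simp only [coeff_mul, coeff_expand, mul_ite, mul_zero, ← sum_filter]
  refine sum_nbij' (fun x => (x.1, x.2 / k)) (fun x => (x.1, k * x.2)) ?_ ?_ ?_ ?_ ?_
  · rintro ⟨i, j⟩ h
    simp only [mem_filter, HasAntidiagonal.mem_antidiagonal] at h
    obtain ⟨hij, m, rfl⟩ := h
    have : m ≤ k * m := Nat.le_mul_of_pos_left m hk.bot_lt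
    simp only [mem_filter, mem_product, mem_range, Nat.mul_div_cancel_left m hk.bot_lt]
    omega
  · rintro ⟨i, j⟩ h
    simp only [mem_filter, mem_product] at h
    simpa only [mem_filter, HasAntidiagonal.mem_antidiagonal, dvd_mul_right, and_true] using h.2
  · rintro ⟨i, j⟩ h
    simp [Nat.mul_div_cancel' (mem_filter.1 h).2]
  · rintro ⟨i, j⟩ -
    simp [Nat.mul_div_cancel_left j hk.bot_lt]
  · intros
    rfl

end PowerSeries

section GeneratingFunctions

variable (R : Type*)

section CommSemiring

variable [CommSemiring R]

noncomputable def partitionSeries : R⟦X⟧ := mk fun n => (p n : R)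

noncomputable def sigmaSeries : R⟦X⟧ := mk fun n => (σ 1 n : R)

theorem X_mul_derivative_partitionSeries :
    X * d⁄dX R (partitionSeries R) = sigmaSeries R * partitionSeries R := by
  ext n
  rw [coeff_X_mul_derivative, coeff_mul]
  simp only [partitionSeries, sigmaSeries, coeff_mk]
  rw [Finset.Nat.sum_antidiagonal_eq_sum_Icc_of_zero (by simp)]
  exact_mod_cast congrArg (Nat.cast : ℕ → R) (mul_p_eq_sum_sigma_mul n)

end CommSemiring

variable {R} [CommRing R]

theorem coeff_partitionSeries_mul_expand {k : ℕ} (hk : k ≠ 0) (n : ℕ) :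
    coeff n (partitionSeries R * expand k hk (partitionSeries R)) = pColor k n := by
  simp [coeff_mul_expand, pColor, partitionSeries]

theorem coeff_sigmaSeries_add_expand {k : ℕ} (hk : k ≠ 0) (m : ℕ) :
    coeff m (sigmaSeries R + k • expand k hk (sigmaSeries R)) = sigmaLabeled k m := by
  rw [map_add, map_nsmul, coeff_expand, sigmaLabeled, Nat.sum_divisors_filter_dvd hk]
  split_ifs <;> simp [sigmaSeries, sigma_one_apply]

end GeneratingFunctions

theorem pColor_recursion_general (k : ℕ) (hk : 0 < k) (n : ℕ) :
    n * pColor k n = ∑ m ∈ Icc 1 n, sigmaLabeled k m * pColor k (n - m) := by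
  have key := congrArg (coeff n) <|
    X_mul_derivative_mul_expand_self k hk.ne' (X_mul_derivative_partitionSeries ℤ)
  rw [coeff_X_mul_derivative, coeff_partitionSeries_mul_expand, coeff_mul] at key
  simp only [coeff_partitionSeries_mul_expand, coeff_sigmaSeries_add_expand] at key
  rw [Finset.Nat.sum_antidiagonal_eq_sum_Icc_of_zero (by simp [sigmaLabeled])] at key
  exact_mod_cast key

theorem pColor_recursion (k : ℕ) (hk : 0 < k) (n : ℕ) (hn : 0 < n) :
    n * pColor k n = ∑ m ∈ Icc 1 n, sigmaLabeled k m * pColor k (n - m) :=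
  pColor_recursion_general k hk n
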